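/- Let f(ζ) = −log(1−ζ)/ζ² − 1/ζ − 1/2 on ℂ \ [1, ∞), where log is the principal branch (with the singularity at ζ = 0 removable). Then Re f(ζ) > −1 for all ζ in the domain, with Re f(x) ≥ −1 on the real axis and equality only at x = 2; moreover f(ζ) → −1/2 as ζ → ∞. -/

import Mathlib

/-!
On the real axis `Re f(x) + 1 = (x²/2 - x - log|1-x|)/x²`, and `log|1-x| ≤ |1-x| - 1` makes the
numerator positive except at `x = 0, 2`. Off the axis, `F = exp(-f)` is holomorphic in the lower
half-plane and, set to `0` at `ζ = 1` (where `Re f → +∞`), continuous up to the real axis; it is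
bounded near infinity because `f → -1/2`. Phragmén–Lindelöf carries the bound `|F| ≤ e` from the
real axis into the half-plane, i.e. `Re f ≥ -1` there. Equality at an interior point would make
`|F|` maximal, hence constant, contradicting `|F| → e^{1/2}` at infinity. The upper half-plane
follows from `f(ζ̄) = conj f(ζ)`.
-/

open Real Complex Filter

/-- The function `f(ζ) = -log(1-ζ)/ζ² - 1/ζ - 1/2`, with the removable
singularity at `ζ = 0` filled in by `f(0) = 0`. -/
noncomputable def ffun (ζ : ℂ) : ℂ :=
  if ζ = 0 then 0
  else -Complex.log (1 - ζ) / ζ ^ 2 - 1 / ζ - 1 / 2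

open Set Topology Bornology ComplexConjugate

lemma ffun_of_ne_zero {ζ : ℂ} (h : ζ ≠ 0) :
    ffun ζ = -Complex.log (1 - ζ) / ζ ^ 2 - 1 / ζ - 1 / 2 := if_neg h

lemma log_abs_one_sub_lt {x : ℝ} (h0 : x ≠ 0) (h1 : x ≠ 1) (h2 : x ≠ 2) :
    Real.log |1 - x| < x ^ 2 / 2 - x := by
  rcases lt_or_gt_of_ne h1 with hx | hx
  · have hlog := Real.log_lt_sub_one_of_pos (x := 1 - x) (by linarith) (by contrapose! h0; linarith)
    rw [abs_of_pos (by linarith)]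
    nlinarith [sq_pos_of_ne_zero h0]
  · have hlog := Real.log_le_sub_one_of_pos (x := x - 1) (by linarith)
    rw [abs_sub_comm, abs_of_pos (by linarith)]
    nlinarith [sq_pos_of_ne_zero (sub_ne_zero.2 h2)]

lemma ffun_ofReal_re_add_one {x : ℝ} (h0 : x ≠ 0) :
    (ffun x).re + 1 = (x ^ 2 / 2 - x - Real.log |1 - x|) / x ^ 2 := by
  have hre : (ffun x).re = -Real.log |1 - x| / x ^ 2 - 1 / x - 1 / 2 := by
    rw [ffun_of_ne_zero (ofReal_ne_zero.2 h0), ← ofReal_one, ← ofReal_sub, ← ofReal_pow,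
      ← ofReal_div]
    simp only [sub_re, div_ofReal_re, neg_re, log_re, norm_real, Real.norm_eq_abs, ofReal_re]
    norm_num
  rw [hre]
  field_simp
  ring

lemma neg_one_lt_ffun_ofReal_re {x : ℝ} (h1 : x ≠ 1) (h2 : x ≠ 2) : -1 < (ffun x).re := by
  rcases eq_or_ne x 0 with rfl | h0
  · simp [ffun]
  · have key := div_pos (sub_pos.2 (log_abs_one_sub_lt h0 h1 h2)) (pow_pos (abs_pos.2 h0) 2)
    rw [sq_abs, sub_sub, ← sub_sub, ← ffun_ofReal_re_add_one h0] at key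
    linarith

lemma ffun_ofReal_two_re : (ffun (2 : ℝ)).re = -1 := by
  have := ffun_ofReal_re_add_one (x := 2) two_ne_zero
  norm_num at this ⊢
  linarith

lemma neg_one_le_ffun_ofReal_re {x : ℝ} (h1 : x ≠ 1) : -1 ≤ (ffun x).re := by
  rcases eq_or_ne x 2 with rfl | h2
  · exact ffun_ofReal_two_re.ge
  · exact (neg_one_lt_ffun_ofReal_re h1 h2).le

lemma norm_log_le_norm_add_pi {w : ℂ} (h : 1 ≤ ‖w‖) : ‖Complex.log w‖ ≤ ‖w‖ + π := by
  have hlog : 0 ≤ Real.log ‖w‖ := Real.log_nonneg h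
  calc ‖Complex.log w‖ ≤ |Real.log ‖w‖| + |w.arg| := by
        simpa only [log_re, log_im] using norm_le_abs_re_add_abs_im (Complex.log w)
    _ ≤ ‖w‖ + π := by
        rw [abs_of_nonneg hlog]
        linarith [Real.log_le_sub_one_of_pos (by linarith : 0 < ‖w‖), abs_arg_le_pi w]

lemma tendsto_log_one_sub_div_sq_cobounded :
    Tendsto (fun ζ : ℂ => Complex.log (1 - ζ) / ζ ^ 2) (cobounded ℂ) (𝓝 0) := by
  refine squeeze_zero_norm' ?_
    ((tendsto_const_nhds (x := 2 + π)).div_atTop tendsto_norm_cobounded_atTop)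
  filter_upwards [tendsto_norm_cobounded_atTop.eventually_ge_atTop 2] with ζ hζ
  have h1 : ‖1 - ζ‖ ≤ 1 + ‖ζ‖ := (norm_sub_le _ _).trans_eq (by rw [norm_one])
  have h2 : 1 ≤ ‖1 - ζ‖ := by
    have := norm_sub_norm_le ζ 1
    rw [norm_one, norm_sub_rev] at this
    linarith
  rw [norm_div, norm_pow, div_le_div_iff₀ (by positivity) (by positivity)]
  have hlog : ‖Complex.log (1 - ζ)‖ ≤ 1 + π + ‖ζ‖ := by linarith [norm_log_le_norm_add_pi h2]
  nlinarith [mul_le_mul_of_nonneg_right hlog (norm_nonneg ζ),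
    mul_nonneg (mul_nonneg (by linarith : (0:ℝ) ≤ ‖ζ‖ - 1) (norm_nonneg ζ)) pi_pos.le]

lemma tendsto_ffun_cobounded : Tendsto ffun (cobounded ℂ) (𝓝 (-1 / 2)) := by
  have h := (tendsto_log_one_sub_div_sq_cobounded.neg.sub tendsto_inv₀_cobounded).sub_const
    (1 / 2 : ℂ)
  rw [show -(0 : ℂ) - 0 - 1 / 2 = -1 / 2 by norm_num] at h
  refine h.congr' ?_
  filter_upwards [eventually_ne_cobounded 0] with ζ hζ
  rw [ffun_of_ne_zero hζ, neg_div, one_div ζ]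

lemma ffun_mul_sq (ζ : ℂ) : ffun ζ * ζ ^ 2 = -(Complex.log (1 + -ζ) - logTaylor 3 (-ζ)) := by
  rcases eq_or_ne ζ 0 with rfl | hζ
  · simp [ffun, logTaylor_at_zero]
  · rw [← sub_eq_add_neg, ffun_of_ne_zero hζ]
    simp only [logTaylor, Finset.sum_range_succ, Finset.sum_range_zero]
    field_simp
    ring

lemma continuousAt_ffun_zero : ContinuousAt ffun 0 := by
  obtain ⟨c, hc⟩ := ((log_sub_logTaylor_isBigO 2).comp_tendsto
    (continuous_neg.tendsto' (0 : ℂ) 0 neg_zero)).bound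
  rw [ContinuousAt, show ffun 0 = 0 from if_pos rfl]
  refine squeeze_zero_norm' ?_
    (((continuous_const (y := c)).mul continuous_norm).tendsto' 0 0 (by simp))
  filter_upwards [hc] with ζ hζ
  rcases eq_or_ne ζ 0 with rfl | h0
  · simp [ffun]
  · have hpos : 0 < ‖ζ‖ ^ 2 := by positivity
    refine le_of_mul_le_mul_right ?_ hpos
    rw [← norm_pow, ← norm_mul, ffun_mul_sq, norm_neg, norm_pow]
    simpa [Function.comp_def, norm_pow, norm_neg, pow_succ, mul_assoc] using hζ

lemma ffun_re_of_ne_zero {w : ℂ} (hw : w ≠ 0) :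
    (ffun w).re = -Real.log ‖w - 1‖ * ((w ^ 2)⁻¹).re
      + (((w ^ 2)⁻¹).im * (1 - w).arg - (1 / w).re - 1 / 2) := by
  rw [ffun_of_ne_zero hw, neg_div, div_eq_mul_inv, norm_sub_rev]
  simp only [sub_re, neg_re, mul_re, log_re, log_im]
  norm_num
  ring

lemma tendsto_ffun_re_one : Tendsto (fun w => (ffun w).re) (𝓝[≠] 1) atTop := by
  have hlog : Tendsto (fun w : ℂ => -Real.log ‖w - 1‖) (𝓝[≠] 1) atTop :=
    tendsto_neg_atBot_atTop.comp
      (Real.tendsto_log_nhdsGT_zero.comp (tendsto_norm_sub_self_nhdsNE 1))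
  have hu : ContinuousAt (fun w : ℂ => (w ^ 2)⁻¹) 1 := by fun_prop (disch := norm_num)
  have hre : Tendsto (fun w : ℂ => ((w ^ 2)⁻¹).re) (𝓝[≠] 1) (𝓝 1) := by
    simpa only [Function.comp_def, one_pow, inv_one, one_re] using
      (continuous_re.continuousAt.comp hu).tendsto.mono_left nhdsWithin_le_nhds
  have him : Tendsto (fun w : ℂ => ((w ^ 2)⁻¹).im * (1 - w).arg) (𝓝[≠] 1) (𝓝 0) := by
    refine Tendsto.zero_mul_isBoundedUnder_le ?_ (isBoundedUnder_of ⟨π, fun w => ?_⟩)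
    · simpa only [Function.comp_def, one_pow, inv_one, one_im] using
        (continuous_im.continuousAt.comp hu).tendsto.mono_left nhdsWithin_le_nhds
    · exact abs_arg_le_pi (1 - w)
  have hinv : Tendsto (fun w : ℂ => (1 / w).re) (𝓝[≠] 1) (𝓝 1) := by
    have : ContinuousAt (fun w : ℂ => (1 / w).re) 1 := by fun_prop (disch := norm_num)
    simpa using this.tendsto.mono_left nhdsWithin_le_nhds
  refine ((hlog.atTop_mul_pos one_pos hre).atTop_add ((him.sub hinv).sub_const (1 / 2))).congr' ?_
  filter_upwards [nhdsWithin_le_nhds (eventually_ne_nhds one_ne_zero)] with w hw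
  exact (ffun_re_of_ne_zero hw).symm

lemma continuousWithinAt_log_of_im_nonneg {w : ℂ} (hw : w ≠ 0) :
    ContinuousWithinAt Complex.log {z | 0 ≤ z.im} w := by
  by_cases h : w ∈ slitPlane
  · exact (continuousAt_clog h).continuousWithinAt
  · rw [mem_slitPlane_iff, not_or, not_lt, not_not] at h
    refine continuousWithinAt_log_of_re_neg_of_im_zero (h.1.lt_of_ne fun hre => hw ?_) h.2
    exact Complex.ext hre h.2

lemma continuousWithinAt_ffun {z : ℂ} (hz : z ≠ 1) :
    ContinuousWithinAt ffun {y | y.im ≤ 0} z := by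
  rcases eq_or_ne z 0 with rfl | h0
  · exact continuousAt_ffun_zero.continuousWithinAt
  have hlog : ContinuousWithinAt (fun y => Complex.log (1 - y)) {y | y.im ≤ 0} z :=
    (continuousWithinAt_log_of_im_nonneg (sub_ne_zero.2 hz.symm)).comp
      (continuous_const.sub continuous_id).continuousWithinAt
      fun y (hy : y.im ≤ 0) => by simpa using hy
  have hform : ContinuousWithinAt (fun y => -Complex.log (1 - y) / y ^ 2 - 1 / y - 1 / 2)
      {y | y.im ≤ 0} z :=
    ((hlog.neg.div (continuousWithinAt_id.pow 2) (pow_ne_zero 2 h0)).sub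
      (continuousWithinAt_const.div continuousWithinAt_id h0)).sub continuousWithinAt_const
  refine hform.congr_of_eventuallyEq ?_ (ffun_of_ne_zero h0)
  filter_upwards [nhdsWithin_le_nhds (eventually_ne_nhds h0)] with y hy
  exact ffun_of_ne_zero hy

lemma differentiableAt_ffun {ζ : ℂ} (h0 : ζ ≠ 0) (h1 : 1 - ζ ∈ slitPlane) :
    DifferentiableAt ℂ ffun ζ := by
  have hlog : DifferentiableAt ℂ (fun z => Complex.log (1 - z)) ζ :=
    (differentiableAt_log h1).comp ζ (differentiableAt_id.const_sub 1)
  have hform : DifferentiableAt ℂ (fun z => -Complex.log (1 - z) / z ^ 2 - 1 / z - 1 / 2) ζ :=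
    ((hlog.neg.div (differentiableAt_pow 2) (pow_ne_zero 2 h0)).sub
      ((differentiableAt_const 1).div differentiableAt_id h0)).sub (differentiableAt_const _)
  refine hform.congr_of_eventuallyEq ?_
  filter_upwards [eventually_ne_nhds h0] with z hz
  exact ffun_of_ne_zero hz

noncomputable def expNegFfun (ζ : ℂ) : ℂ :=
  if ζ = 1 then 0 else cexp (-ffun ζ)

lemma expNegFfun_eventuallyEq {z : ℂ} (hz : z ≠ 1) :
    expNegFfun =ᶠ[𝓝 z] fun ζ => cexp (-ffun ζ) := by
  filter_upwards [eventually_ne_nhds hz] with ζ hζ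
  exact if_neg hζ

lemma norm_expNegFfun {ζ : ℂ} (h : ζ ≠ 1) : ‖expNegFfun ζ‖ = Real.exp (-(ffun ζ).re) := by
  rw [expNegFfun, if_neg h, norm_exp, neg_re]

lemma continuousAt_expNegFfun_one : ContinuousAt expNegFfun 1 := by
  rw [← continuousWithinAt_compl_self, ContinuousWithinAt, show expNegFfun 1 = 0 from if_pos rfl,
    tendsto_zero_iff_norm_tendsto_zero]
  refine (Real.tendsto_exp_atBot.comp (tendsto_neg_atTop_atBot.comp tendsto_ffun_re_one)).congr' ?_
  filter_upwards [self_mem_nhdsWithin] with ζ hζ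
  exact (norm_expNegFfun hζ).symm

lemma continuousOn_expNegFfun : ContinuousOn expNegFfun {z | z.im ≤ 0} := by
  intro z _
  rcases eq_or_ne z 1 with rfl | hz
  · exact continuousAt_expNegFfun_one.continuousWithinAt
  · refine (continuous_exp.continuousAt.comp_continuousWithinAt
      (continuousWithinAt_ffun hz).neg).congr_of_eventuallyEq ?_ (if_neg hz)
    exact nhdsWithin_le_nhds (expNegFfun_eventuallyEq hz)

lemma differentiableOn_expNegFfun : DifferentiableOn ℂ expNegFfun {z | z.im < 0} := by
  intro z (hz : z.im < 0)
  have h0 : z ≠ 0 := by rintro rfl; simp at hz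
  have h1 : 1 - z ∈ slitPlane := mem_slitPlane_iff.2 (Or.inr (by simpa using hz.ne))
  exact (((differentiableAt_ffun h0 h1).neg.cexp).congr_of_eventuallyEq
    (expNegFfun_eventuallyEq (by rintro rfl; simp at hz))).differentiableWithinAt

lemma tendsto_expNegFfun_cobounded :
    Tendsto expNegFfun (cobounded ℂ) (𝓝 (cexp (1 / 2))) := by
  have h := (Complex.continuous_exp.tendsto _).comp tendsto_ffun_cobounded.neg
  rw [show -(-1 / 2 : ℂ) = 1 / 2 by ring] at h
  refine h.congr' ?_
  filter_upwards [eventually_ne_cobounded 1] with ζ hζ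
  exact (if_neg hζ).symm

lemma tendsto_expNegFfun_neg_I_mul :
    Tendsto (fun w : ℂ => expNegFfun (-I * w)) (cobounded ℂ) (𝓝 (cexp (1 / 2))) :=
  tendsto_expNegFfun_cobounded.comp (tendsto_mul_left_cobounded (neg_ne_zero.2 I_ne_zero))

lemma tendsto_expNegFfun_neg_I_mul_ofReal :
    Tendsto (fun t : ℝ => expNegFfun (-I * t)) atTop (𝓝 (cexp (1 / 2))) :=
  tendsto_expNegFfun_neg_I_mul.comp (RCLike.tendsto_ofReal_atTop_cobounded ℂ)

lemma norm_expNegFfun_ofReal_le (x : ℝ) : ‖expNegFfun x‖ ≤ Real.exp 1 := by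
  rcases eq_or_ne x 1 with rfl | h1
  · rw [ofReal_one, show expNegFfun 1 = 0 from if_pos rfl, norm_zero]
    exact (Real.exp_pos 1).le
  · rw [norm_expNegFfun (by exact_mod_cast h1), Real.exp_le_exp]
    linarith [neg_one_le_ffun_ofReal_re h1]

lemma norm_expNegFfun_le_of_im_nonpos {ζ : ℂ} (hζ : ζ.im ≤ 0) : ‖expNegFfun ζ‖ ≤ Real.exp 1 := by
  have hd : DiffContOnCl ℂ expNegFfun {z | z.im < 0} :=
    ⟨differentiableOn_expNegFfun, by
      rw [closure_setOfPred_im_lt]; exact continuousOn_expNegFfun⟩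
  have hrot : DiffContOnCl ℂ (fun w => expNegFfun (-I * w)) {w | 0 < w.re} :=
    hd.comp (differentiable_id.const_mul (-I)).diffContOnCl
      fun w (hw : 0 < w.re) => show (-I * w).im < 0 by simpa using hw
  have hbdd : (fun w => expNegFfun (-I * w)) =O[cobounded ℂ ⊓ 𝓟 {w | 0 < w.re}]
      fun w => Real.exp (0 * ‖w‖ ^ (0 : ℝ)) := by
    simp only [zero_mul, Real.exp_zero]
    exact (tendsto_expNegFfun_neg_I_mul.isBigO_one ℝ).mono inf_le_left
  have h := PhragmenLindelof.right_half_plane_of_bounded_on_real hrot ⟨0, two_pos, 0, hbdd⟩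
    tendsto_expNegFfun_neg_I_mul_ofReal.norm.isBoundedUnder_le
    (fun x => by
      rw [show -I * (x * I) = x by linear_combination -(x : ℂ) * I_sq]
      exact norm_expNegFfun_ofReal_le x)
    (z := I * ζ) (by simpa using hζ)
  simpa [← mul_assoc] using h

lemma neg_one_le_ffun_re_of_im_neg {ζ : ℂ} (hζ : ζ.im < 0) : -1 ≤ (ffun ζ).re := by
  have h := norm_expNegFfun_le_of_im_nonpos hζ.le
  rw [norm_expNegFfun (by rintro rfl; simp at hζ), Real.exp_le_exp] at h
  linarith

lemma neg_one_lt_ffun_re_of_im_neg {ζ : ℂ} (hζ : ζ.im < 0) : -1 < (ffun ζ).re := by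
  refine (neg_one_le_ffun_re_of_im_neg hζ).lt_of_ne fun heq => ?_
  have hne : ∀ {z : ℂ}, z.im < 0 → z ≠ 1 := by rintro z hz rfl; simp at hz
  have hmax : IsMaxOn (norm ∘ expNegFfun) {z | z.im < 0} ζ := fun z (hz : z.im < 0) => by
    simpa [norm_expNegFfun (hne hζ), ← heq] using norm_expNegFfun_le_of_im_nonpos hz.le
  have hconst := Complex.norm_eqOn_of_isPreconnected_of_isMaxOn
    (convex_halfSpace_im_lt 0).isPreconnected (isOpen_lt continuous_im continuous_const)
    differentiableOn_expNegFfun hζ hmax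
  have hlim := tendsto_expNegFfun_neg_I_mul_ofReal.norm
  have hev : ∀ᶠ t : ℝ in atTop, ‖expNegFfun (-I * t)‖ = ‖expNegFfun ζ‖ := by
    filter_upwards [eventually_gt_atTop 0] with t ht
    exact hconst (show (-I * t).im < 0 by simpa using ht)
  have := tendsto_nhds_unique (hlim.congr' hev) tendsto_const_nhds
  rw [norm_expNegFfun (hne hζ), ← heq, norm_exp, Real.exp_eq_exp] at this
  norm_num at this

lemma ffun_conj {ζ : ℂ} (h : ζ.im ≠ 0) : ffun (conj ζ) = conj (ffun ζ) := by
  have h0 : ζ ≠ 0 := by rintro rfl; simp at h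
  have harg : (1 - ζ).arg ≠ π := fun harg => h (by simpa using (arg_eq_pi_iff.1 harg).2)
  rw [ffun_of_ne_zero h0, ffun_of_ne_zero ((map_ne_zero _).2 h0), ← map_one (starRingEnd ℂ),
    ← map_sub, log_conj _ harg]
  simp [map_ofNat]

theorem stmt_16 :
    (∀ ζ : ℂ, ¬(ζ.im = 0 ∧ 1 ≤ ζ.re) → -1 < (ffun ζ).re)
    ∧ (∀ x : ℝ, x ≠ 1 → -1 ≤ (ffun x).re ∧ ((ffun x).re = -1 ↔ x = 2))
    ∧ Tendsto ffun (Filter.comap (fun z : ℂ => ‖z‖) atTop) (nhds (-1 / 2 : ℂ)) := by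
  refine ⟨fun ζ hζ => ?_, fun x hx => ⟨neg_one_le_ffun_ofReal_re hx, ?_⟩, ?_⟩
  · rcases lt_trichotomy ζ.im 0 with h | h | h
    · exact neg_one_lt_ffun_re_of_im_neg h
    · have hre : ζ.re < 1 := lt_of_not_ge fun h' => hζ ⟨h, h'⟩
      rw [← re_add_im ζ, h, ofReal_zero, zero_mul, add_zero]
      exact neg_one_lt_ffun_ofReal_re hre.ne (by linarith)
    · simpa [ffun_conj h.ne'] using neg_one_lt_ffun_re_of_im_neg (ζ := conj ζ) (by simpa using h)
  · refine ⟨fun h => ?_, fun h => h ▸ ffun_ofReal_two_re⟩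
    by_contra h2
    exact (neg_one_lt_ffun_ofReal_re hx h2).ne' h
  · rw [comap_norm_atTop]
    exact tendsto_ffun_cobounded
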